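/- In the fully connected four-unit example with the stated potential outcomes, all unit-level ordered spillover effects of going from one to two treated neighbors (holding the rest fixed) are nonnegative, yet there exists a conditional assignment distribution (placing all mass on D=(1,1,1,0) given T_1=(1,2) and on D=(1,0,0,1) given T_1=(1,1)) under which the treated-neighbor-count estimand τ((1,2),(1,1)) = E[Y_1 | T_1=(1,2)] − E[Y_1 | T_1=(1,1)] equals −1. -/

import Mathlib

open Finset
open scoped Classical

noncomputable section

/-- Probability of event `A` under mass function `p` on a finite space. -/
def prb {Ω : Type*} [Fintype Ω] (p : Ω → ℝ) (A : Ω → Prop) : ℝ :=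
  ∑ ω, if A ω then p ω else 0

/-- Unnormalized expectation of `f` on the event `A`. -/
def eiv {Ω : Type*} [Fintype Ω] (p : Ω → ℝ) (f : Ω → ℝ) (A : Ω → Prop) : ℝ :=
  ∑ ω, if A ω then p ω * f ω else 0

/-- Expectation of `f`. -/
def expv {Ω : Type*} [Fintype Ω] (p : Ω → ℝ) (f : Ω → ℝ) : ℝ := ∑ ω, p ω * f ω

/-- Conditional expectation of `f` given the event `A`. -/
def cexp {Ω : Type*} [Fintype Ω] (p : Ω → ℝ) (f : Ω → ℝ) (A : Ω → Prop) : ℝ :=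
  eiv p f A / prb p A

/-- Conditional probability of `A` given `B`. -/
def cpr {Ω : Type*} [Fintype Ω] (p : Ω → ℝ) (A B : Ω → Prop) : ℝ :=
  prb p (fun ω => A ω ∧ B ω) / prb p B

/-- Real value of a boolean treatment. -/
def bR : Bool → ℝ := fun x => if x then 1 else 0

/-- Number of treated neighbors of unit 1 in the complete four-unit network. -/
def nb4 (d : Fin 4 → Bool) : ℕ := (Finset.univ.filter (fun j => j ≠ 0 ∧ d j = true)).card

/-- Potential outcomes of unit 1 in the complete four-unit example:
`Y₁(1,1,1,0)=1, Y₁(1,1,0,1)=2, Y₁(1,0,1,1)=3, Y₁(1,1,0,0)=0, Y₁(1,0,1,0)=1, Y₁(1,0,0,1)=2`,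
and `0` otherwise. -/
def Y1quad : (Fin 4 → Bool) → ℝ := fun d =>
  if d 0 = true ∧ (nb4 d = 1 ∨ nb4 d = 2) then bR (d 2) + 2 * bR (d 3) else 0

/-! When unit 1 is treated with one or two treated neighbours, its outcome is `D₂ + 2 D₃`
(units indexed from 0), which is monotone in the assignment, so every ordered effect is
nonnegative. The count-based estimand may instead compare non-nested assignments: under the
half–half mixture of `(1,1,1,0)` and `(1,0,0,1)` each exposure event contains exactly one atom,
so the two conditional means are the outcomes 1 and 2 at those atoms. -/

section Concentrated

variable {Ω : Type*} [Fintype Ω] {p : Ω → ℝ} {B : Ω → Prop} {a : Ω}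

lemma sum_ite_eq_of_forall_ne_eq_zero (g : Ω → ℝ) (ha : B a)
    (hB : ∀ ω, B ω → ω ≠ a → g ω = 0) :
    (∑ ω, if B ω then g ω else 0) = g a := by
  rw [Fintype.sum_eq_single a fun ω hω => ite_eq_right_iff.2 fun h => hB ω h hω, if_pos ha]

lemma prb_eq_of_forall_ne_eq_zero (ha : B a) (hB : ∀ ω, B ω → ω ≠ a → p ω = 0) :
    prb p B = p a :=
  sum_ite_eq_of_forall_ne_eq_zero p ha hB

lemma eiv_eq_of_forall_ne_eq_zero (f : Ω → ℝ) (ha : B a)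
    (hB : ∀ ω, B ω → ω ≠ a → p ω = 0) :
    eiv p f B = p a * f a :=
  sum_ite_eq_of_forall_ne_eq_zero (fun ω => p ω * f ω) ha
    fun ω hω hne => by simp [hB ω hω hne]

lemma cexp_eq_of_forall_ne_eq_zero (f : Ω → ℝ) (hpa : p a ≠ 0) (ha : B a)
    (hB : ∀ ω, B ω → ω ≠ a → p ω = 0) :
    cexp p f B = f a := by
  rw [cexp, eiv_eq_of_forall_ne_eq_zero f ha hB, prb_eq_of_forall_ne_eq_zero ha hB,
    mul_div_cancel_left₀ _ hpa]

lemma cpr_eq_self_eq_one_of_forall_ne_eq_zero (hpa : p a ≠ 0) (ha : B a)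
    (hB : ∀ ω, B ω → ω ≠ a → p ω = 0) :
    cpr p (· = a) B = 1 := by
  have hAB : prb p (fun ω => ω = a ∧ B ω) = p a :=
    prb_eq_of_forall_ne_eq_zero ⟨rfl, ha⟩ fun ω hω hne => absurd hω.1 hne
  rw [cpr, hAB, prb_eq_of_forall_ne_eq_zero ha hB, div_self hpa]

end Concentrated

section HalfMix

variable {Ω : Type*} {a b : Ω}

def halfMix (a b : Ω) : Ω → ℝ :=
  fun ω => (if ω = a then 1 / 2 else 0) + (if ω = b then 1 / 2 else 0)

lemma halfMix_comm (a b : Ω) : halfMix a b = halfMix b a :=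
  funext fun _ => add_comm _ _

lemma halfMix_nonneg (a b ω : Ω) : 0 ≤ halfMix a b ω := by
  unfold halfMix; split_ifs <;> norm_num

lemma sum_halfMix [Fintype Ω] (a b : Ω) : ∑ ω, halfMix a b ω = 1 := by
  simp only [halfMix, sum_add_distrib, sum_ite_eq', mem_univ, if_true]
  norm_num

lemma halfMix_left_ne_zero (hab : a ≠ b) : halfMix a b a ≠ 0 := by
  simp [halfMix, hab]

lemma halfMix_eq_zero_of_ne_left {B : Ω → Prop} (hb : ¬ B b) :
    ∀ ω, B ω → ω ≠ a → halfMix a b ω = 0 := by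
  rintro ω hω hne
  have hne' : ω ≠ b := by rintro rfl; exact hb hω
  simp [halfMix, hne, hne']

variable [Fintype Ω] {B : Ω → Prop}

lemma cexp_halfMix_left (f : Ω → ℝ) (hab : a ≠ b) (ha : B a) (hb : ¬ B b) :
    cexp (halfMix a b) f B = f a :=
  cexp_eq_of_forall_ne_eq_zero f (halfMix_left_ne_zero hab) ha (halfMix_eq_zero_of_ne_left hb)

lemma cexp_halfMix_right (f : Ω → ℝ) (hab : a ≠ b) (ha : ¬ B a) (hb : B b) :
    cexp (halfMix a b) f B = f b := by
  rw [halfMix_comm]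
  exact cexp_halfMix_left f hab.symm hb ha

lemma cpr_halfMix_left (hab : a ≠ b) (ha : B a) (hb : ¬ B b) :
    cpr (halfMix a b) (· = a) B = 1 :=
  cpr_eq_self_eq_one_of_forall_ne_eq_zero (halfMix_left_ne_zero hab) ha
    (halfMix_eq_zero_of_ne_left hb)

lemma cpr_halfMix_right (hab : a ≠ b) (ha : ¬ B a) (hb : B b) :
    cpr (halfMix a b) (· = b) B = 1 := by
  rw [halfMix_comm]
  exact cpr_halfMix_left hab.symm hb ha

end HalfMix

lemma bR_le_bR {b b' : Bool} (h : b' = true → b = true) : bR b' ≤ bR b := by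
  cases b <;> cases b' <;> simp_all [bR]

lemma Y1quad_of_treated {d : Fin 4 → Bool} (h0 : d 0 = true) (hnb : nb4 d = 1 ∨ nb4 d = 2) :
    Y1quad d = bR (d 2) + 2 * bR (d 3) := by
  simp [Y1quad, h0, hnb]

lemma Y1quad_mono_of_one_to_two {d d' : Fin 4 → Bool} (hle : ∀ j, d' j = true → d j = true)
    (h0 : d 0 = true) (h0' : d' 0 = true) (h2 : nb4 d = 2) (h1 : nb4 d' = 1) :
    Y1quad d' ≤ Y1quad d := by
  rw [Y1quad_of_treated h0 (.inr h2), Y1quad_of_treated h0' (.inl h1)]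
  linarith [bR_le_bR (hle 2), bR_le_bR (hle 3)]

lemma Y1quad_one_one_one_zero : Y1quad ![true, true, true, false] = 1 := by
  rw [Y1quad_of_treated rfl (.inr (by decide))]
  show bR true + 2 * bR false = 1
  norm_num [bR]

lemma Y1quad_one_zero_zero_one : Y1quad ![true, false, false, true] = 2 := by
  rw [Y1quad_of_treated rfl (.inl (by decide))]
  show bR false + 2 * bR true = 2
  norm_num [bR]

/-- all ordered unit-level spillover effects of going from one to two treated
neighbors are nonnegative, yet there exists an assignment distribution placing all conditional
mass on `D=(1,1,1,0)` given `T₁=(1,2)` and on `D=(1,0,0,1)` given `T₁=(1,1)` under which the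
treated-neighbor-count estimand `τ((1,2),(1,1)) = E[Y₁|T₁=(1,2)] − E[Y₁|T₁=(1,1)] = -1`. -/
theorem stmt11 :
    (∀ d d' : Fin 4 → Bool, (∀ j, d' j = true → d j = true) →
      d 0 = true → d' 0 = true → nb4 d = 2 → nb4 d' = 1 →
      0 ≤ Y1quad d - Y1quad d') ∧
    ∃ p : (Fin 4 → Bool) → ℝ,
      (∀ d, 0 ≤ p d) ∧ (∑ d, p d = 1) ∧
      cpr p (fun d => d = ![true, true, true, false])
        (fun d => d 0 = true ∧ nb4 d = 2) = 1 ∧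
      cpr p (fun d => d = ![true, false, false, true])
        (fun d => d 0 = true ∧ nb4 d = 1) = 1 ∧
      cexp p Y1quad (fun d => d 0 = true ∧ nb4 d = 2) -
        cexp p Y1quad (fun d => d 0 = true ∧ nb4 d = 1) = -1 := by
  have hab : ![true, true, true, false] ≠ ![true, false, false, true] := by decide
  refine ⟨fun d d' hle h0 h0' h2 h1 => sub_nonneg.2 (Y1quad_mono_of_one_to_two hle h0 h0' h2 h1),
    halfMix ![true, true, true, false] ![true, false, false, true], halfMix_nonneg _ _,
    sum_halfMix _ _, cpr_halfMix_left hab (by decide) (by decide),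
    cpr_halfMix_right hab (by decide) (by decide), ?_⟩
  rw [cexp_halfMix_left _ hab (by decide) (by decide),
    cexp_halfMix_right _ hab (by decide) (by decide),
    Y1quad_one_one_one_zero, Y1quad_one_zero_zero_one]
  norm_num
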